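/- arXiv:math/0012183 — 6 statements merged into one kernel-verified Lean document; each statement's English description precedes it below -/
import Mathlib

section
/- Let T_{i j} : E j → E i (i, j ∈ ℕ) be a family of bounded linear operators and C ≥ 0 a constant such that for every finitely supported ψ ∈ H = lp E 2 (i.e. π_j ψ = 0 for all but finitely many j), the vector whose i-th component is the finite sum Σ_j T_{i j}(π_j ψ) belongs to H and has norm at most C‖ψ‖. Then for EVERY ψ ∈ H and every i the series Σ_{j=0}^∞ T_{i j}(π_j ψ) converges in E i, the vector it assembles belongs to H, and its norm is at most C‖ψ‖. (Part (iii) of the paper's theorem: a chaos matrix that is bounded on the finitely supported vectors is bounded, with full domain.) -/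
/-!
Apply the hypothesis to the truncations `φ N = Σ_{j<N} ι_j (π_j ψ)`: their images `η N` have the
partial sums `Σ_{j<N} T_{i j}(π_j ψ)` as coordinates. The difference of two truncations is again
finitely supported and its image is `η N - η M`, so `‖η N - η M‖ ≤ C ‖φ N - φ M‖`. Since `φ N → ψ`,
the `η N` form a Cauchy sequence in the complete space `lp E 2`; its limit is the required vector,
and the bound passes to the limit.
-/

open Filter Topology
open scoped ENNReal

theorem cauchySeq_of_dist_le_mul_dist {X Y : Type*} [PseudoMetricSpace X] [PseudoMetricSpace Y]
    {u : ℕ → X} {v : ℕ → Y} (C : ℝ) (huv : ∀ m n, dist (u m) (u n) ≤ C * dist (v m) (v n))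
    (hv : CauchySeq v) : CauchySeq u := by
  rw [cauchySeq_iff_tendsto_dist_atTop_0] at hv ⊢
  exact squeeze_zero (fun _ ↦ dist_nonneg) (fun mn ↦ huv mn.1 mn.2) (by simpa using hv.const_mul C)

namespace lp

section Truncation

variable {α : Type*} [DecidableEq α] {E : α → Type*} [∀ i, NormedAddCommGroup (E i)]
  {p : ℝ≥0∞}

noncomputable def truncation (s : Finset α) (f : lp E p) : lp E p :=
  ∑ j ∈ s, lp.single p j (f j)

theorem truncation_apply (s : Finset α) (f : lp E p) (i : α) :
    truncation s f i = if i ∈ s then f i else 0 := by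
  rw [truncation, lp.coeFn_sum, Finset.sum_apply]
  simp [lp.single_apply, Finset.sum_pi_single]

theorem finite_setOf_truncation_ne_zero (s : Finset α) (f : lp E p) :
    {j | truncation s f j ≠ 0}.Finite :=
  s.finite_toSet.subset fun j hj ↦ by_contra fun hjs ↦ hj (by simp_all [truncation_apply])

end Truncation

theorem tendsto_truncation_range {E : ℕ → Type*} [∀ i, NormedAddCommGroup (E i)] {p : ℝ≥0∞}
    [Fact (1 ≤ p)] (hp : p ≠ ∞) (f : lp E p) :
    Tendsto (fun N ↦ truncation (Finset.range N) f) atTop (𝓝 f) :=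
  (lp.hasSum_single hp f).tendsto_sum_nat

end lp

section ChaosMatrix

variable {𝕜 : Type*} [NormedField 𝕜]
  {α : Type*} {E : α → Type*} [∀ j, NormedAddCommGroup (E j)] [∀ j, NormedSpace 𝕜 (E j)]
  {ι : Type*} {F : ι → Type*} [∀ i, NormedAddCommGroup (F i)] [∀ i, NormedSpace 𝕜 (F i)]
  {p q : ℝ≥0∞}

theorem tsum_apply_truncation [DecidableEq α] {G : Type*} [NormedAddCommGroup G] [NormedSpace 𝕜 G]
    (T : ∀ j, E j →L[𝕜] G) (s : Finset α) (f : lp E p) :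
    ∑' j, T j (lp.truncation s f j) = ∑ j ∈ s, T j (f j) := by
  rw [tsum_eq_sum fun j hj ↦ by rw [lp.truncation_apply, if_neg hj, map_zero]]
  exact Finset.sum_congr rfl fun j hj ↦ by rw [lp.truncation_apply, if_pos hj]

theorem norm_sub_le_of_bounded_on_finitelySupported (T : ∀ i j, E j →L[𝕜] F i) (C : ℝ)
    (hbdd : ∀ ψ : lp E p, {j | ψ j ≠ 0}.Finite →
      ∃ η : lp F q, (∀ i, η i = ∑' j, T i j (ψ j)) ∧ ‖η‖ ≤ C * ‖ψ‖)
    {x y : lp E p} (hx : {j | x j ≠ 0}.Finite) (hy : {j | y j ≠ 0}.Finite) {ηx ηy : lp F q}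
    (hηx : ∀ i, ηx i = ∑' j, T i j (x j)) (hηy : ∀ i, ηy i = ∑' j, T i j (y j)) :
    ‖ηx - ηy‖ ≤ C * ‖x - y‖ := by
  have hxy : {j | (x - y) j ≠ 0}.Finite :=
    (hx.union hy).subset fun j hj ↦ by_contra fun h ↦ hj (by simp_all)
  obtain ⟨η, hη, hη_norm⟩ := hbdd (x - y) hxy
  have summable_row {z : lp E p} (hz : {j | z j ≠ 0}.Finite) (i : ι) :
      Summable fun j ↦ T i j (z j) :=
    summable_of_hasFiniteSupport <| hz.subset fun j hj ↦ by_contra fun h ↦ hj (by simp_all)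
  suffices η = ηx - ηy from this ▸ hη_norm
  ext1; funext i
  simp only [hη, lp.coeFn_sub, Pi.sub_apply, map_sub, hηx, hηy]
  exact (summable_row hx i).tsum_sub (summable_row hy i)

end ChaosMatrix

theorem chaosMatrix_bounded_of_bounded_on_finitelySupported_general
    {E : ℕ → Type*} [∀ i, NormedAddCommGroup (E i)] [∀ i, InnerProductSpace ℂ (E i)]
    [∀ i, CompleteSpace (E i)]
    (T : ∀ i j : ℕ, E j →L[ℂ] E i) (C : ℝ)
    (hbdd : ∀ ψ : lp E 2, {j : ℕ | ψ j ≠ 0}.Finite →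
      ∃ η : lp E 2, (∀ i : ℕ, η i = ∑' j : ℕ, T i j (ψ j)) ∧ ‖η‖ ≤ C * ‖ψ‖) :
    ∀ ψ : lp E 2, ∃ η : lp E 2,
      (∀ i : ℕ, Tendsto (fun N => ∑ j ∈ Finset.range N, T i j (ψ j)) atTop (nhds (η i))) ∧
      ‖η‖ ≤ C * ‖ψ‖ := by
  intro ψ
  set φ := fun N ↦ lp.truncation (Finset.range N) ψ
  have hφ_finite N := lp.finite_setOf_truncation_ne_zero (Finset.range N) ψ
  have hφ_lim : Tendsto φ atTop (𝓝 ψ) := lp.tendsto_truncation_range (by norm_num) ψ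
  choose η hη hη_norm using fun N ↦ hbdd (φ N) (hφ_finite N)
  have hη_apply N i : η N i = ∑ j ∈ Finset.range N, T i j (ψ j) :=
    (hη N i).trans (tsum_apply_truncation (T i) _ ψ)
  have hη_cauchy : CauchySeq η := by
    refine cauchySeq_of_dist_le_mul_dist C (fun m n ↦ ?_) hφ_lim.cauchySeq
    simpa only [dist_eq_norm] using norm_sub_le_of_bounded_on_finitelySupported T C hbdd
      (hφ_finite m) (hφ_finite n) (hη m) (hη n)
  obtain ⟨η_lim, hη_lim⟩ := cauchySeq_tendsto_of_complete hη_cauchy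
  refine ⟨η_lim, fun i ↦ ?_, ?_⟩
  · have hη_coe := (lp.uniformContinuous_coe.continuous.tendsto η_lim).comp hη_lim
    exact (tendsto_pi_nhds.1 hη_coe i).congr (hη_apply · i)
  · exact le_of_tendsto_of_tendsto' hη_lim.norm (hφ_lim.norm.const_mul C) hη_norm

/-- If a chaos matrix `T = (T_{i j})` of bounded operators is bounded by `C` on the finitely
supported vectors of `H = lp E 2` (where on such vectors the matrix acts by the finite sums
`Σ_j T_{i j}(π_j ψ)`, encoded below by `∑' j, T i j (ψ j)`), then for EVERY `ψ ∈ H` and every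
`i` the series `Σ_j T_{i j}(π_j ψ)` converges, the assembled vector belongs to `H`, and its
norm is at most `C‖ψ‖`. -/
theorem chaosMatrix_bounded_of_bounded_on_finitelySupported
    {E : ℕ → Type*} [∀ i, NormedAddCommGroup (E i)] [∀ i, InnerProductSpace ℂ (E i)]
    [∀ i, CompleteSpace (E i)]
    (T : ∀ i j : ℕ, E j →L[ℂ] E i) (C : ℝ) (hC : 0 ≤ C)
    (hbdd : ∀ ψ : lp E 2, {j : ℕ | ψ j ≠ 0}.Finite →
      ∃ η : lp E 2, (∀ i : ℕ, η i = ∑' j : ℕ, T i j (ψ j)) ∧ ‖η‖ ≤ C * ‖ψ‖) :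
    ∀ ψ : lp E 2, ∃ η : lp E 2,
      (∀ i : ℕ, Tendsto (fun N => ∑ j ∈ Finset.range N, T i j (ψ j)) atTop (nhds (η i))) ∧
      ‖η‖ ≤ C * ‖ψ‖ :=
  chaosMatrix_bounded_of_bounded_on_finitelySupported_general T C hbdd
end

section
/- Let H = lp E 2, let p ∈ [1,∞] with conjugate exponent q, and let X : [0,1] → B(H) be strongly measurable with finite L^p-norm κ. Then: (i) for all i, j ∈ ℕ the map u ↦ π_i ∘ X_u ∘ ι_j is strongly measurable and its L^p-norm is at most κ; (ii) for each t ∈ [0,1] and all i, j, the map Y_t^{ij} : E j → E i defined by Y_t^{ij} x = ∫₀ᵗ π_i(X_u(ι_j x)) du is a bounded operator with ‖Y_t^{ij}‖ ≤ t^{1/q} κ; (iii) for every ψ ∈ H the map u ↦ X_u ψ is Bochner integrable on [0,t], the map ψ ↦ ∫₀ᵗ X_u ψ du is a bounded operator on H of norm at most t^{1/q} κ, and for every i the series Σ_{j=0}^∞ Y_t^{ij}(π_j ψ) converges in E i to π_i(∫₀ᵗ X_u ψ du). (The paper's theorem on entrywise integration of operator-valued processes on a Hilbert sum.) -/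
/-!
On the finite measure space `[0,t]`, Hölder's inequality bounds `∫₀ᵗ ‖X_u φ‖ du` by
`t^{1/q} κ ‖φ‖`, and the entries inherit the bound since `‖π_i T ι_j‖ ≤ ‖T‖`. This bound makes
`φ ↦ ∫₀ᵗ X_u φ du` a continuous additive map, so it commutes with the expansion
`ψ = Σ_j ι_j (π_j ψ)`, while `π_i` commutes with the Bochner integral.
-/


open MeasureTheory Filter
open scoped ENNReal NNReal

/-- The canonical isometric inclusion `ι_i : E i → lp E 2` as a continuous linear map. -/
noncomputable def lpIncl (E : ℕ → Type*) [∀ i, NormedAddCommGroup (E i)]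
    [∀ i, InnerProductSpace ℂ (E i)] (i : ℕ) : E i →L[ℂ] lp E 2 :=
  LinearMap.mkContinuous
    { toFun := fun a => lp.single 2 i a
      map_add' := fun a b => by
        refine lp.ext (funext fun j => ?_)
        by_cases hj : j = i
        · subst hj
          simp [lp.single_apply_self]
        · simp [lp.single_apply_ne _ _ _ hj]
      map_smul' := fun c a => by simpa using lp.single_smul 2 i a c }
    1 (fun a => by
      have h := lp.norm_single (E := E) (p := 2) (by norm_num) i a
      simp [h])

/-- The canonical coordinate projection `π_i : lp E 2 → E i` as a continuous linear map. -/
noncomputable def lpProj (E : ℕ → Type*) [∀ i, NormedAddCommGroup (E i)]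
    [∀ i, InnerProductSpace ℂ (E i)] (i : ℕ) : lp E 2 →L[ℂ] E i :=
  LinearMap.mkContinuous
    { toFun := fun ψ => ψ i
      map_add' := fun ψ φ => rfl
      map_smul' := fun c ψ => rfl }
    1 (fun ψ => by
      simp only [one_mul]
      exact lp.norm_apply_le_norm (E := E) (p := 2) (by norm_num) ψ i)

/-- The `(i,j)` chaos-matrix entry `T^i_j = π_i ∘ T ∘ ι_j` of a bounded operator on `lp E 2`. -/
noncomputable def lpEntry {E : ℕ → Type*} [∀ i, NormedAddCommGroup (E i)]
    [∀ i, InnerProductSpace ℂ (E i)] (T : lp E 2 →L[ℂ] lp E 2) (i j : ℕ) : E j →L[ℂ] E i :=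
  (lpProj E i).comp (T.comp (lpIncl E j))

/-- Lebesgue measure on the time interval `[0,1]`, viewed as a measure on the subtype. -/
noncomputable def muIcc : Measure (Set.Icc (0:ℝ) 1) :=
  Measure.comap Subtype.val volume

section LpEntries

variable {E : ℕ → Type*} [∀ i, NormedAddCommGroup (E i)] [∀ i, InnerProductSpace ℂ (E i)]

lemma norm_lpIncl_le (j : ℕ) : ‖lpIncl E j‖ ≤ 1 :=
  LinearMap.mkContinuous_norm_le _ zero_le_one _

lemma norm_lpProj_le (i : ℕ) : ‖lpProj E i‖ ≤ 1 :=
  LinearMap.mkContinuous_norm_le _ zero_le_one _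

lemma norm_lpEntry_le (T : lp E 2 →L[ℂ] lp E 2) (i j : ℕ) : ‖lpEntry T i j‖ ≤ ‖T‖ :=
  calc ‖lpEntry T i j‖ ≤ ‖lpProj E i‖ * (‖T‖ * ‖lpIncl E j‖) :=
        (ContinuousLinearMap.opNorm_comp_le _ _).trans
          (mul_le_mul_of_nonneg_left (ContinuousLinearMap.opNorm_comp_le _ _) (norm_nonneg _))
    _ ≤ 1 * (‖T‖ * 1) := by gcongr; exacts [norm_lpProj_le i, norm_lpIncl_le j]
    _ = ‖T‖ := by ring

lemma hasSum_lpIncl (ψ : lp E 2) : HasSum (fun j => lpIncl E j (ψ j)) ψ :=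
  lp.hasSum_single ENNReal.ofNat_ne_top ψ

end LpEntries

lemma muIcc_eq_volume : muIcc = (volume : Measure unitInterval) := rfl

instance : IsProbabilityMeasure muIcc := by
  rw [muIcc_eq_volume]; infer_instance

lemma muIcc_real_Iic (t : Set.Icc (0:ℝ) 1) : muIcc.real (Set.Iic t) = t := by
  rw [measureReal_def, muIcc_eq_volume, unitInterval.volume_Iic, ENNReal.toReal_ofReal t.2.1]

lemma ENNReal.toReal_one_div_eq_one_sub {p q : ℝ≥0∞} (hpq : 1/p + 1/q = 1) :
    (1/q).toReal = 1 - 1/p.toReal := by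
  have hp : 1/p ≠ ∞ := ne_top_of_le_ne_top one_ne_top (le_self_add.trans hpq.le)
  have hq : 1/q ≠ ∞ := ne_top_of_le_ne_top one_ne_top (le_add_self.trans hpq.le)
  have := congrArg ENNReal.toReal hpq
  rw [ENNReal.toReal_add hp hq, ENNReal.toReal_one, one_div, ENNReal.toReal_inv] at this
  rw [one_div p.toReal]
  linarith

section Holder

variable {α F : Type*} [MeasurableSpace α] {μ : Measure α} [IsFiniteMeasure μ]
  [NormedAddCommGroup F] {p q : ℝ≥0∞} {f : α → F} {C : ℝ≥0}

lemma integrable_of_eLpNorm_le (hp : 1 ≤ p) (hf : AEStronglyMeasurable f μ)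
    (hC : eLpNorm f p μ ≤ C) : Integrable f μ :=
  MemLp.integrable hp ⟨hf, hC.trans_lt ENNReal.coe_lt_top⟩

lemma norm_integral_le_of_eLpNorm_le [NormedSpace ℝ F] (hp : 1 ≤ p) (hpq : 1/p + 1/q = 1)
    (hf : AEStronglyMeasurable f μ) (hC : eLpNorm f p μ ≤ C) :
    ‖∫ a, f a ∂μ‖ ≤ μ.real Set.univ ^ (1/q).toReal * C := by
  have hL1 : eLpNorm f 1 μ ≤ C * μ Set.univ ^ (1/q).toReal := by
    have := eLpNorm_le_eLpNorm_mul_rpow_measure_univ (μ := μ) hp hf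
    rw [ENNReal.toReal_one, div_one, ← ENNReal.toReal_one_div_eq_one_sub hpq] at this
    exact this.trans (by gcongr)
  calc ‖∫ a, f a ∂μ‖ ≤ ∫ a, ‖f a‖ ∂μ := norm_integral_le_integral_norm f
    _ = (eLpNorm f 1 μ).toReal := by
        rw [integral_norm_eq_lintegral_enorm hf, eLpNorm_one_eq_lintegral_enorm]
    _ ≤ (C * μ Set.univ ^ (1/q).toReal).toReal :=
        ENNReal.toReal_mono (by finiteness) hL1
    _ = μ.real Set.univ ^ (1/q).toReal * C := by
        rw [ENNReal.toReal_mul, ← ENNReal.toReal_rpow, mul_comm, measureReal_def]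
        rfl

end Holder

section OperatorProcess

variable {α 𝕜 G H : Type*} [MeasurableSpace α] {μ : Measure α} [NontriviallyNormedField 𝕜]
  [NormedAddCommGroup G] [NormedSpace 𝕜 G] [NormedAddCommGroup H] [NormedSpace 𝕜 H]
  {X : α → G →L[𝕜] H} {p q : ℝ≥0∞} {κ : ℝ≥0}

lemma eLpNorm_apply_le (hκ : eLpNorm (fun u => ‖X u‖) p μ ≤ κ) (φ : G) :
    eLpNorm (fun u => X u φ) p μ ≤ (κ * ‖φ‖₊ : ℝ≥0) := by
  calc eLpNorm (fun u => X u φ) p μ ≤ eLpNorm (‖φ‖ • fun u => ‖X u‖) p μ :=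
        eLpNorm_mono_real fun u => by simpa [mul_comm] using (X u).le_opNorm φ
    _ = ‖φ‖₊ * eLpNorm (fun u => ‖X u‖) p μ := by
        rw [eLpNorm_const_smul, enorm_norm, enorm_eq_nnnorm]
    _ ≤ (κ * ‖φ‖₊ : ℝ≥0) := by
        rw [ENNReal.coe_mul, mul_comm]; gcongr

lemma hasSum_integral_apply [NormedSpace ℝ H] (hint : ∀ φ, Integrable (fun u => X u φ) μ)
    {C : ℝ} (hC : ∀ φ, ‖∫ u, X u φ ∂μ‖ ≤ C * ‖φ‖) {ι : Type*} {f : ι → G} {φ : G}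
    (hf : HasSum f φ) : HasSum (fun j => ∫ u, X u (f j) ∂μ) (∫ u, X u φ ∂μ) := by
  let L : G →+ H :=
    { toFun := fun φ => ∫ u, X u φ ∂μ
      map_zero' := by simp
      map_add' := fun a b => by simp only [map_add]; exact integral_add (hint a) (hint b) }
  exact hf.map L (AddMonoidHomClass.continuous_of_bound L C hC)

variable [IsFiniteMeasure μ]

lemma integrable_apply_of_eLpNorm_le (hp : 1 ≤ p)
    (hX : ∀ φ, AEStronglyMeasurable (fun u => X u φ) μ)
    (hκ : eLpNorm (fun u => ‖X u‖) p μ ≤ κ) (φ : G) : Integrable (fun u => X u φ) μ :=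
  integrable_of_eLpNorm_le hp (hX φ) (eLpNorm_apply_le hκ φ)

lemma norm_integral_apply_le [NormedSpace ℝ H] (hp : 1 ≤ p) (hpq : 1/p + 1/q = 1)
    (hX : ∀ φ, AEStronglyMeasurable (fun u => X u φ) μ)
    (hκ : eLpNorm (fun u => ‖X u‖) p μ ≤ κ) (φ : G) :
    ‖∫ u, X u φ ∂μ‖ ≤ μ.real Set.univ ^ (1/q).toReal * κ * ‖φ‖ := by
  have := norm_integral_le_of_eLpNorm_le hp hpq (hX φ) (eLpNorm_apply_le hκ φ)
  simpa [mul_assoc] using this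

end OperatorProcess

section UnitIntervalProcess

variable {𝕜 G H : Type*} [NontriviallyNormedField 𝕜] [NormedAddCommGroup G] [NormedSpace 𝕜 G]
  [NormedAddCommGroup H] [NormedSpace 𝕜 H] {X : Set.Icc (0:ℝ) 1 → G →L[𝕜] H} {p q : ℝ≥0∞}
  {κ : ℝ≥0}

lemma integrableOn_Iic_apply (hp : 1 ≤ p) (hX : ∀ φ, StronglyMeasurable fun u => X u φ)
    (hκ : eLpNorm (fun u => ‖X u‖) p muIcc ≤ κ) (t : Set.Icc (0:ℝ) 1) (φ : G) :
    IntegrableOn (fun u => X u φ) (Set.Iic t) muIcc :=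
  integrable_apply_of_eLpNorm_le (μ := muIcc.restrict (Set.Iic t)) hp
    (fun φ => (hX φ).aestronglyMeasurable)
    ((eLpNorm_restrict_le _ _ _ _).trans hκ) φ

lemma norm_setIntegral_Iic_apply_le [NormedSpace ℝ H] (hp : 1 ≤ p) (hpq : 1/p + 1/q = 1)
    (hX : ∀ φ, StronglyMeasurable fun u => X u φ)
    (hκ : eLpNorm (fun u => ‖X u‖) p muIcc ≤ κ) (t : Set.Icc (0:ℝ) 1) (φ : G) :
    ‖∫ u in Set.Iic t, X u φ ∂muIcc‖ ≤ (t : ℝ) ^ (1/q).toReal * κ * ‖φ‖ := by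
  have := norm_integral_apply_le (μ := muIcc.restrict (Set.Iic t)) hp hpq
    (fun φ => (hX φ).aestronglyMeasurable)
    ((eLpNorm_restrict_le _ _ _ _).trans hκ) φ
  rwa [measureReal_restrict_apply_univ, muIcc_real_Iic] at this

end UnitIntervalProcess

lemma hasSum_integral_lpEntry {E : ℕ → Type*} [∀ i, NormedAddCommGroup (E i)]
    [∀ i, InnerProductSpace ℂ (E i)] [∀ i, CompleteSpace (E i)] {α : Type*} [MeasurableSpace α]
    {μ : Measure α} {X : α → lp E 2 →L[ℂ] lp E 2} (hint : ∀ φ, Integrable (fun u => X u φ) μ)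
    {C : ℝ} (hC : ∀ φ, ‖∫ u, X u φ ∂μ‖ ≤ C * ‖φ‖) (ψ : lp E 2) (i : ℕ) :
    HasSum (fun j => ∫ u, lpEntry (X u) i j (ψ j) ∂μ) ((∫ u, X u ψ ∂μ) i) := by
  have hcomm : ∀ j,
      ∫ u, lpEntry (X u) i j (ψ j) ∂μ = lpProj E i (∫ u, X u (lpIncl E j (ψ j)) ∂μ) :=
    fun j => (lpProj E i).integral_comp_comm (hint _)
  simp only [hcomm]
  exact (lpProj E i).hasSum (hasSum_integral_apply hint hC (hasSum_lpIncl ψ))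

/-- Entrywise integration of an operator-valued process `X ∈ L^p([0,1], B(H)_so)` on the
Hilbert sum `H = lp E 2`, with `L^p`-norm at most `κ` and conjugate exponent `q`:
(i) each entry process `u ↦ X_u{}^i_j` is strongly measurable with `L^p`-norm at most `κ`;
(ii) each entrywise indefinite integral `Y_t{}^i_j` is a bounded operator of norm at most
`t^{1/q} κ`; (iii) `u ↦ X_u ψ` is Bochner integrable on `[0,t]`, the indefinite integral is
a bounded operator of norm at most `t^{1/q} κ`, and `Σ_j Y_t{}^i_j (π_j ψ)` converges to
`π_i (∫₀ᵗ X_u ψ du)`. -/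
theorem entrywise_integration
    {E : ℕ → Type*} [∀ i, NormedAddCommGroup (E i)] [∀ i, InnerProductSpace ℂ (E i)]
    [∀ i, CompleteSpace (E i)]
    (p q : ℝ≥0∞) (hp : 1 ≤ p) (hpq : 1/p + 1/q = 1)
    (X : Set.Icc (0:ℝ) 1 → (lp E 2 →L[ℂ] lp E 2))
    (hmeas : ∀ ψ : lp E 2, StronglyMeasurable fun u => X u ψ)
    (κ : ℝ≥0) (hκ : eLpNorm (fun u => ‖X u‖) p muIcc ≤ κ) :
    (∀ i j : ℕ,
      (∀ x : E j, StronglyMeasurable fun u => lpEntry (X u) i j x) ∧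
      eLpNorm (fun u => ‖lpEntry (X u) i j‖) p muIcc ≤ κ) ∧
    (∀ (t : Set.Icc (0:ℝ) 1) (i j : ℕ) (x : E j),
      IntegrableOn (fun u => lpEntry (X u) i j x) (Set.Iic t) muIcc ∧
      ‖∫ u in Set.Iic t, lpEntry (X u) i j x ∂muIcc‖ ≤ (t : ℝ) ^ ((1/q).toReal) * κ * ‖x‖) ∧
    (∀ (t : Set.Icc (0:ℝ) 1) (ψ : lp E 2),
      IntegrableOn (fun u => X u ψ) (Set.Iic t) muIcc ∧
      ‖∫ u in Set.Iic t, X u ψ ∂muIcc‖ ≤ (t : ℝ) ^ ((1/q).toReal) * κ * ‖ψ‖ ∧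
      ∀ i : ℕ,
        Tendsto
          (fun N => ∑ j ∈ Finset.range N, ∫ u in Set.Iic t, lpEntry (X u) i j (ψ j) ∂muIcc)
          atTop (nhds ((∫ u in Set.Iic t, X u ψ ∂muIcc) i))) := by
  have hentry : ∀ i j : ℕ,
      (∀ x : E j, StronglyMeasurable fun u => lpEntry (X u) i j x) ∧
      eLpNorm (fun u => ‖lpEntry (X u) i j‖) p muIcc ≤ κ := fun i j =>
    ⟨fun x => (lpProj E i).continuous.comp_stronglyMeasurable (hmeas (lpIncl E j x)),
      (eLpNorm_mono_real fun u => by simpa using norm_lpEntry_le (X u) i j).trans hκ⟩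
  refine ⟨hentry, fun t i j x => ?_, fun t ψ => ?_⟩
  · exact ⟨integrableOn_Iic_apply hp (hentry i j).1 (hentry i j).2 t x,
      norm_setIntegral_Iic_apply_le hp hpq (hentry i j).1 (hentry i j).2 t x⟩
  · exact ⟨integrableOn_Iic_apply hp hmeas hκ t ψ,
      norm_setIntegral_Iic_apply_le hp hpq hmeas hκ t ψ,
      fun i => (hasSum_integral_lpEntry (integrableOn_Iic_apply hp hmeas hκ t)
        (norm_setIntegral_Iic_apply_le hp hpq hmeas hκ t) ψ i).tendsto_sum_nat⟩
end

section
/- Let k ≥ 1 be an integer and ξ > 0 a real number. Let Ξ : ℕ → ℕ → ℝ satisfy 0 ≤ Ξ i j for all i, j, Ξ i j = 0 whenever |i − j| > k (Ξ is (2k+1)-diagonal), and Ξ i j ≤ ξ·(i + j) for all i, j. Then for every finitely supported x : ℕ → ℝ and every real z with 0 ≤ z < 1/(ξ(4k² + 2k)), the series Σ_{n=0}^∞ zⁿ ‖Ξⁿ x‖₂ / n! converges. In other words, every finitely supported vector is an analytic vector for Ξ with radius of convergence at least 1/(ξ(4k²+2k)). (Part (i) of the paper's proposition on analytic vectors for banded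 scalar matrices of linear growth.) -/
/-!
If `x` vanishes from index `M` on and `|x j| ≤ C`, bandedness makes `Ξⁿ x` vanish from `M + nk`
on, and one more application of `Ξ` multiplies the sup norm by at most
`(2k+1) ξ (2(M+nk)+k) ≤ ξ(4k²+2k)(M+1+n)`. Hence
`‖Ξⁿ x‖₂ ≤ (M+nk) ‖Ξⁿ x‖_∞ ≤ k C (M+1) (ξ(4k²+2k))ⁿ n! (n+M+1 choose M+1)`, and the series is
dominated by `Σ (n+M+1 choose M+1) rⁿ` with `r = z ξ(4k²+2k) < 1`.
-/

noncomputable def matVec (Ξ : ℕ → ℕ → ℝ) (y : ℕ → ℝ) : ℕ → ℝ :=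
  fun i => ∑' j : ℕ, Ξ i j * y j

noncomputable def l2Norm (y : ℕ → ℝ) : ℝ :=
  Real.sqrt (∑' i : ℕ, (y i) ^ 2)

open Finset Nat

def IsBanded (k : ℕ) (Ξ : ℕ → ℕ → ℝ) : Prop :=
  ∀ i j : ℕ, (k : ℤ) < |(i : ℤ) - (j : ℤ)| → Ξ i j = 0

lemma l2Norm_le_of_abs_le {y : ℕ → ℝ} {N : ℕ} {B : ℝ} (hy : ∀ i, N ≤ i → y i = 0)
    (hB : ∀ i, |y i| ≤ B) : l2Norm y ≤ N * B := by
  have hB0 : 0 ≤ B := (abs_nonneg _).trans (hB 0)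
  have hsum : ∑' i, y i ^ 2 = ∑ i ∈ range N, y i ^ 2 :=
    tsum_eq_sum fun i hi => by rw [hy i (by simpa using hi), zero_pow two_ne_zero]
  have hN : (N : ℝ) ≤ (N : ℝ) ^ 2 := by exact_mod_cast Nat.le_self_pow two_ne_zero N
  rw [l2Norm, hsum, ← Real.sqrt_sq (by positivity : 0 ≤ (N : ℝ) * B)]
  refine Real.sqrt_le_sqrt ?_
  calc ∑ i ∈ range N, y i ^ 2 ≤ N * B ^ 2 := by
        simpa using sum_le_card_nsmul (range N) (fun i => y i ^ 2) (B ^ 2)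
          fun i _ => sq_le_sq' (neg_le_of_abs_le (hB i)) (le_of_abs_le (hB i))
    _ ≤ (N * B) ^ 2 := by
        rw [mul_pow]
        gcongr

lemma succ_add_mul_ascFactorial (M n : ℕ) :
    (M + 1 + n) * (M + 1).ascFactorial n = (M + 1) * n ! * (n + (M + 1)).choose (M + 1) := by
  rw [← succ_ascFactorial, ascFactorial_eq_factorial_mul_choose, add_comm n, choose_symm_add,
    mul_assoc]

lemma exists_bound_of_finite_support {x : ℕ → ℝ} (hx : {j : ℕ | x j ≠ 0}.Finite) :
    ∃ M : ℕ, ∃ C : ℝ, (∀ j, M ≤ j → x j = 0) ∧ ∀ j, |x j| ≤ C := by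
  obtain ⟨M, hM⟩ := hx.bddAbove
  have hsupp : ∀ j, M + 1 ≤ j → x j = 0 := fun j hj => by
    by_contra h
    exact absurd (hM h) (by omega)
  refine ⟨M + 1, ∑ j ∈ range (M + 1), |x j|, hsupp, fun j => ?_⟩
  rcases lt_or_ge j (M + 1) with hj | hj
  · exact single_le_sum (fun i _ => abs_nonneg (x i)) (mem_range.2 hj)
  · rw [hsupp j hj, abs_zero]
    positivity

section Banded

variable {k : ℕ} {ξ : ℝ} {Ξ : ℕ → ℕ → ℝ}

lemma matVec_eq_sum_Icc (hband : IsBanded k Ξ) (y : ℕ → ℝ) (i : ℕ) :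
    matVec Ξ y i = ∑ j ∈ Icc (i - k) (i + k), Ξ i j * y j := by
  refine tsum_eq_sum fun j hj => ?_
  rw [mem_Icc] at hj
  rw [hband i j (by rw [lt_abs]; omega), zero_mul]

lemma matVec_eq_zero_of_le (hband : IsBanded k Ξ) {y : ℕ → ℝ} {N : ℕ}
    (hy : ∀ j, N ≤ j → y j = 0) {i : ℕ} (hi : N + k ≤ i) : matVec Ξ y i = 0 := by
  rw [matVec_eq_sum_Icc hband]
  refine sum_eq_zero fun j hj => ?_
  rw [mem_Icc] at hj
  rw [hy j (by omega), mul_zero]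

lemma abs_matVec_le (hξ : 0 ≤ ξ) (hband : IsBanded k Ξ) (hnn : ∀ i j, 0 ≤ Ξ i j)
    (hgrow : ∀ i j : ℕ, Ξ i j ≤ ξ * ((i : ℝ) + (j : ℝ))) {y : ℕ → ℝ} {N : ℕ} {B : ℝ}
    (hy : ∀ j, N ≤ j → y j = 0) (hB : ∀ j, |y j| ≤ B) (i : ℕ) :
    |matVec Ξ y i| ≤ (2 * k + 1) * (ξ * (2 * N + k)) * B := by
  have hB0 : 0 ≤ B := (abs_nonneg _).trans (hB 0)
  have hterm : ∀ j ∈ Icc (i - k) (i + k), |Ξ i j * y j| ≤ ξ * (2 * N + k) * B := by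
    intro j hj
    rcases lt_or_ge j N with hjN | hjN
    · rw [mem_Icc] at hj
      have hij : ((i + j : ℕ) : ℝ) ≤ 2 * N + k := by
        exact_mod_cast (by omega : i + j ≤ 2 * N + k)
      rw [abs_mul, abs_of_nonneg (hnn i j)]
      refine mul_le_mul ((hgrow i j).trans ?_) (hB j) (abs_nonneg _) (by positivity)
      push_cast at hij
      gcongr
    · rw [hy j hjN, mul_zero, abs_zero]
      positivity
  have hcard : ((Icc (i - k) (i + k)).card : ℝ) ≤ 2 * k + 1 := by
    exact_mod_cast (by rw [Nat.card_Icc]; omega : (Icc (i - k) (i + k)).card ≤ 2 * k + 1)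
  calc |matVec Ξ y i| ≤ ∑ j ∈ Icc (i - k) (i + k), |Ξ i j * y j| := by
        rw [matVec_eq_sum_Icc hband]
        exact abs_sum_le_sum_abs _ _
    _ ≤ (Icc (i - k) (i + k)).card * (ξ * (2 * N + k) * B) := by
        simpa using sum_le_card_nsmul _ _ _ hterm
    _ ≤ (2 * k + 1) * (ξ * (2 * N + k)) * B := by
        rw [← mul_assoc]
        gcongr

lemma iterate_matVec_eq_zero_of_le (hband : IsBanded k Ξ) {x : ℕ → ℝ} {M : ℕ}
    (hx : ∀ j, M ≤ j → x j = 0) (n i : ℕ) (hi : M + n * k ≤ i) :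
    (matVec Ξ)^[n] x i = 0 := by
  induction n generalizing i with
  | zero => exact hx i (by simpa using hi)
  | succ n ih =>
    rw [Function.iterate_succ_apply']
    exact matVec_eq_zero_of_le hband ih (by rw [add_mul] at hi; omega)

lemma abs_iterate_matVec_le (hk : 1 ≤ k) (hξ : 0 ≤ ξ) (hband : IsBanded k Ξ)
    (hnn : ∀ i j, 0 ≤ Ξ i j) (hgrow : ∀ i j : ℕ, Ξ i j ≤ ξ * ((i : ℝ) + (j : ℝ)))
    {x : ℕ → ℝ} {M : ℕ} {C : ℝ} (hx : ∀ j, M ≤ j → x j = 0) (hC : ∀ j, |x j| ≤ C) (n i : ℕ) :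
    |(matVec Ξ)^[n] x i| ≤ C * (ξ * (4 * k ^ 2 + 2 * k)) ^ n * (M + 1).ascFactorial n := by
  induction n generalizing i with
  | zero => simpa using hC i
  | succ n ih =>
    have hC0 : 0 ≤ C := (abs_nonneg _).trans (hC 0)
    have hN : (2 * ((M + n * k : ℕ) : ℝ) + k) ≤ 2 * k * ((M + 1 + n : ℕ) : ℝ) := by
      exact_mod_cast (by nlinarith : 2 * (M + n * k) + k ≤ 2 * k * (M + 1 + n))
    rw [Function.iterate_succ_apply']
    refine (abs_matVec_le hξ hband hnn hgrow (iterate_matVec_eq_zero_of_le hband hx n) ih i).trans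
      ?_
    calc (2 * k + 1) * (ξ * (2 * ((M + n * k : ℕ) : ℝ) + k))
          * (C * (ξ * (4 * k ^ 2 + 2 * k)) ^ n * (M + 1).ascFactorial n)
        ≤ (2 * k + 1) * (ξ * (2 * k * ((M + 1 + n : ℕ) : ℝ)))
          * (C * (ξ * (4 * k ^ 2 + 2 * k)) ^ n * (M + 1).ascFactorial n) := by gcongr
      _ = C * (ξ * (4 * k ^ 2 + 2 * k)) ^ (n + 1) * (M + 1).ascFactorial (n + 1) := by
        rw [ascFactorial_succ]
        push_cast
        ring

lemma l2Norm_iterate_matVec_le (hk : 1 ≤ k) (hξ : 0 ≤ ξ)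
    (hband : IsBanded k Ξ) (hnn : ∀ i j, 0 ≤ Ξ i j)
    (hgrow : ∀ i j : ℕ, Ξ i j ≤ ξ * ((i : ℝ) + (j : ℝ))) {x : ℕ → ℝ} {M : ℕ} {C : ℝ}
    (hx : ∀ j, M ≤ j → x j = 0) (hC : ∀ j, |x j| ≤ C) (n : ℕ) :
    l2Norm ((matVec Ξ)^[n] x) ≤
      k * C * (M + 1) * (ξ * (4 * k ^ 2 + 2 * k)) ^ n * n ! * (n + (M + 1)).choose (M + 1) := by
  have hC0 : 0 ≤ C := (abs_nonneg _).trans (hC 0)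
  have hN : ((M + n * k : ℕ) : ℝ) ≤ k * ((M + 1 + n : ℕ) : ℝ) := by
    exact_mod_cast (by nlinarith : M + n * k ≤ k * (M + 1 + n))
  have hasc : ((M + 1 + n : ℕ) : ℝ) * (M + 1).ascFactorial n
      = (M + 1) * n ! * (n + (M + 1)).choose (M + 1) := by
    exact_mod_cast succ_add_mul_ascFactorial M n
  calc l2Norm ((matVec Ξ)^[n] x)
      ≤ ((M + n * k : ℕ) : ℝ) * (C * (ξ * (4 * k ^ 2 + 2 * k)) ^ n * (M + 1).ascFactorial n) :=
        l2Norm_le_of_abs_le (iterate_matVec_eq_zero_of_le hband hx n)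
          (abs_iterate_matVec_le hk hξ hband hnn hgrow hx hC n)
    _ ≤ k * ((M + 1 + n : ℕ) : ℝ) * (C * (ξ * (4 * k ^ 2 + 2 * k)) ^ n * (M + 1).ascFactorial n) :=
        by gcongr
    _ = k * C * (ξ * (4 * k ^ 2 + 2 * k)) ^ n * (((M + 1 + n : ℕ) : ℝ) * (M + 1).ascFactorial n) :=
        by ring
    _ = _ := by
        rw [hasc]
        ring

end Banded

/-- Analytic vectors for banded scalar matrices of linear growth: if `Ξ` is a nonnegative
`(2k+1)`-diagonal matrix with `Ξ i j ≤ ξ(i+j)`, then every finitely supported vector `x` is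
analytic for `Ξ` with radius of convergence at least `1/(ξ(4k²+2k))`: for every
`0 ≤ z < 1/(ξ(4k²+2k))` the series `Σ_n zⁿ ‖Ξⁿ x‖₂ / n!` converges. -/
theorem analytic_vectors_of_banded_linear_growth
    (k : ℕ) (hk : 1 ≤ k) (ξ : ℝ) (hξ : 0 < ξ)
    (Ξ : ℕ → ℕ → ℝ)
    (hnn : ∀ i j : ℕ, 0 ≤ Ξ i j)
    (hband : ∀ i j : ℕ, (k : ℤ) < |(i : ℤ) - (j : ℤ)| → Ξ i j = 0)
    (hgrow : ∀ i j : ℕ, Ξ i j ≤ ξ * ((i : ℝ) + (j : ℝ)))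
    (x : ℕ → ℝ) (hx : {j : ℕ | x j ≠ 0}.Finite)
    (z : ℝ) (hz0 : 0 ≤ z) (hz : z < 1 / (ξ * (4 * (k : ℝ) ^ 2 + 2 * (k : ℝ)))) :
    Summable fun n : ℕ => z ^ n * l2Norm ((matVec Ξ)^[n] x) / (n.factorial : ℝ) := by
  obtain ⟨M, C, hxM, hxC⟩ := exists_bound_of_finite_support hx
  have hA : 0 < ξ * (4 * (k : ℝ) ^ 2 + 2 * k) := by positivity
  have hr : ‖z * (ξ * (4 * k ^ 2 + 2 * k))‖ < 1 := by
    rw [Real.norm_of_nonneg (by positivity), ← lt_div_iff₀ hA]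
    simpa using hz
  refine Summable.of_nonneg_of_le (fun n => by unfold l2Norm; positivity) (fun n => ?_)
    ((summable_choose_mul_geometric_of_norm_lt_one (M + 1) hr).mul_left (k * C * (M + 1)))
  rw [div_le_iff₀ (by positivity)]
  calc z ^ n * l2Norm ((matVec Ξ)^[n] x)
      ≤ z ^ n * (k * C * (M + 1) * (ξ * (4 * k ^ 2 + 2 * k)) ^ n * n ! *
          (n + (M + 1)).choose (M + 1)) := by
        gcongr
        exact l2Norm_iterate_matVec_le hk hξ.le hband hnn hgrow hxM hxC n
    _ = _ := by rw [mul_pow z]; ring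
end

section
/- Let k ≥ 1 be an integer and ξ > 0 a real number. Let Ξ : ℕ → ℕ → ℝ satisfy 0 ≤ Ξ i j for all i, j, Ξ i j = 0 whenever |i − j| > k (Ξ is (2k+1)-diagonal), and Ξ i j ≤ ξ·(√i + √j) for all i, j. Then for every finitely supported x : ℕ → ℝ and EVERY real z ≥ 0, the series Σ_{n=0}^∞ zⁿ ‖Ξⁿ x‖₂ / n! converges; that is, every finitely supported vector is an analytic vector for Ξ with infinite radius of convergence. (Part (ii) of the paper's proposition on analytic vectors for banded scalar matrices of square-root growth.) -/
private lemma pow_self_le_exp_mul_factorial (m : ℕ) :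
    (m : ℝ) ^ m ≤ Real.exp m * m.factorial := by
  have h1 : (m : ℝ) ^ m / m.factorial ≤ Real.exp m := by
    refine le_trans ?_ (Real.sum_le_exp_of_nonneg (x := (m : ℝ)) (by positivity) (m + 1))
    exact Finset.single_le_sum (f := fun i => (m : ℝ) ^ i / i.factorial)
      (fun i _ => by positivity) (Finset.self_mem_range_succ m)
  have h2 : (0 : ℝ) < m.factorial := by positivity
  calc (m : ℝ) ^ m = (m : ℝ) ^ m / m.factorial * m.factorial := by field_simp
  _ ≤ Real.exp m * m.factorial := mul_le_mul_of_nonneg_right h1 h2.le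

private lemma nat_add_one_le_four_pow (n : ℕ) : (n : ℝ) + 1 ≤ 4 ^ n := by
  induction n with
  | zero => norm_num
  | succ n ih =>
    push_cast
    push_cast at ih
    rw [pow_succ]
    nlinarith [ih, (Nat.cast_nonneg n : (0:ℝ) ≤ (n:ℝ))]

private lemma amgm_sqrt_factorial (H : ℝ) (n : ℕ) :
    H ^ n / Real.sqrt n.factorial
      ≤ (2 * H ^ 2) ^ n / n.factorial / 2 + (1 / 2 : ℝ) ^ n / 2 := by
  set a : ℝ := (Real.sqrt 2 * H) ^ n / Real.sqrt n.factorial with ha_def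
  set b : ℝ := (1 / Real.sqrt 2) ^ n with hb_def
  have hs2 : (0 : ℝ) < Real.sqrt 2 := Real.sqrt_pos.mpr (by norm_num)
  have hfac : (0 : ℝ) ≤ (n.factorial : ℝ) := by positivity
  have h1 : H ^ n / Real.sqrt n.factorial = a * b := by
    rw [ha_def, hb_def, div_mul_eq_mul_div, ← mul_pow]
    congr 2
    field_simp
  have h2 : a ^ 2 = (2 * H ^ 2) ^ n / n.factorial := by
    rw [ha_def, div_pow, ← pow_mul, mul_comm n 2, pow_mul, Real.sq_sqrt hfac,
      mul_pow, Real.sq_sqrt (by norm_num : (0:ℝ) ≤ 2)]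
  have h3 : b ^ 2 = (1 / 2 : ℝ) ^ n := by
    rw [hb_def, ← pow_mul, mul_comm n 2, pow_mul, div_pow,
      Real.sq_sqrt (by norm_num : (0:ℝ) ≤ 2), one_pow]
  rw [h1]
  nlinarith [sq_nonneg (a - b)]

/-- Analytic vectors for banded scalar matrices of square-root growth: if `Ξ` is a
nonnegative `(2k+1)`-diagonal matrix with `Ξ i j ≤ ξ(√i+√j)`, then every finitely supported
vector `x` is analytic for `Ξ` with infinite radius of convergence: for EVERY `z ≥ 0` the
series `Σ_n zⁿ ‖Ξⁿ x‖₂ / n!` converges. -/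
theorem analytic_vectors_of_banded_sqrt_growth
    (k : ℕ) (hk : 1 ≤ k) (ξ : ℝ) (hξ : 0 < ξ)
    (Ξ : ℕ → ℕ → ℝ)
    (hnn : ∀ i j : ℕ, 0 ≤ Ξ i j)
    (hband : ∀ i j : ℕ, (k : ℤ) < |(i : ℤ) - (j : ℤ)| → Ξ i j = 0)
    (hgrow : ∀ i j : ℕ, Ξ i j ≤ ξ * (Real.sqrt (i : ℝ) + Real.sqrt (j : ℝ)))
    (x : ℕ → ℝ) (hx : {j : ℕ | x j ≠ 0}.Finite)
    (z : ℝ) (hz0 : 0 ≤ z) :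
    Summable fun n : ℕ => z ^ n * l2Norm ((matVec Ξ)^[n] x) / (n.factorial : ℝ) := by
  -- support bound for x
  obtain ⟨N, hN⟩ := hx.bddAbove
  have hNsupp : ∀ j, N < j → x j = 0 := by
    intro j hj
    by_contra h
    exact absurd (hN h) (not_le.mpr hj)
  -- uniform bound for x
  set A : ℝ := ∑ j ∈ hx.toFinset, |x j| with hA_def
  have hA0 : 0 ≤ A := Finset.sum_nonneg fun _ _ => abs_nonneg _
  have hA : ∀ j, |x j| ≤ A := by
    intro j
    by_cases h : x j = 0
    · simp only [h, abs_zero]; exact hA0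
    · exact Finset.single_le_sum (f := fun j => |x j|) (fun i _ => abs_nonneg _)
        (hx.mem_toFinset.mpr h)
  set y : ℕ → ℕ → ℝ := fun n => (matVec Ξ)^[n] x with hy_def
  have hysucc : ∀ n, y (n + 1) = matVec Ξ (y n) := fun n =>
    Function.iterate_succ_apply' (matVec Ξ) n x
  -- support propagation
  have hsupp : ∀ n j, N + n * k < j → y n j = 0 := by
    intro n
    induction n with
    | zero => intro j hj; exact hNsupp j (by omega)
    | succ n ih =>
      intro j hj
      rw [hysucc]
      show (∑' m, Ξ j m * y n m) = 0
      have hz : ∀ m, Ξ j m * y n m = 0 := by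
        intro m
        by_cases h : (k : ℤ) < |(j : ℤ) - (m : ℤ)|
        · rw [hband j m h, zero_mul]
        · rw [not_lt, abs_le] at h
          have hnk : (n + 1) * k = n * k + k := by ring
          rw [ih m (by omega), mul_zero]
      simp only [hz, tsum_zero]
  set c : ℕ → ℝ := fun p => Real.sqrt ((N : ℝ) + p * k + 1) with hc_def
  have hc0 : ∀ p, 0 ≤ c p := fun p => Real.sqrt_nonneg _
  set D : ℝ := ((2 * k + 1 : ℕ) : ℝ) * (2 * ξ) with hD_def
  have hD0 : 0 ≤ D := by rw [hD_def]; positivity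
  clear_value D
  have hsq : ∀ p i : ℕ, i ≤ N + p * k → Real.sqrt i ≤ c p := by
    intro p i hi
    apply Real.sqrt_le_sqrt
    have h1 : (i : ℝ) ≤ (N : ℝ) + p * k := by exact_mod_cast hi
    linarith
  -- uniform entrywise bound
  have hbound : ∀ p, ∀ n, n ≤ p → ∀ j, |y n j| ≤ A * (D * c p) ^ n := by
    intro p n
    induction n with
    | zero => intro _ j; simpa [hy_def] using hA j
    | succ n ih =>
      intro hnp i
      have hnp' : n ≤ p := by omega
      have hRHS0 : (0 : ℝ) ≤ A * (D * c p) ^ (n + 1) :=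
        mul_nonneg hA0 (pow_nonneg (mul_nonneg hD0 (hc0 p)) _)
      by_cases hi : N + (n + 1) * k < i
      · rw [hsupp (n + 1) i hi, abs_zero]; exact hRHS0
      · push_neg at hi
        have hik : i ≤ N + p * k := by
          have : (n + 1) * k ≤ p * k := Nat.mul_le_mul_right k hnp
          omega
        rw [hysucc]
        show |∑' m, Ξ i m * y n m| ≤ _
        rw [tsum_eq_sum (s := Finset.Icc (i - k) (i + k)) ?_]
        swap
        · intro m hm
          simp only [Finset.mem_Icc, not_and_or, not_le] at hm
          rw [hband i m ?_, zero_mul]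
          rw [lt_abs]
          omega
        calc |∑ m ∈ Finset.Icc (i - k) (i + k), Ξ i m * y n m|
            ≤ ∑ m ∈ Finset.Icc (i - k) (i + k), |Ξ i m * y n m| :=
              Finset.abs_sum_le_sum_abs _ _
          _ ≤ ∑ _m ∈ Finset.Icc (i - k) (i + k), (2 * ξ * c p) * (A * (D * c p) ^ n) := by
              apply Finset.sum_le_sum
              intro m _
              by_cases hym : y n m = 0
              · rw [hym, mul_zero, abs_zero]
                exact mul_nonneg (by positivity)
                  (mul_nonneg hA0 (pow_nonneg (mul_nonneg hD0 (hc0 p)) _))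
              · have hm' : m ≤ N + n * k := by
                  by_contra h
                  push_neg at h
                  exact hym (hsupp n m h)
                have hmk : m ≤ N + p * k := by
                  have : n * k ≤ p * k := Nat.mul_le_mul_right k hnp'
                  omega
                rw [abs_mul, abs_of_nonneg (hnn i m)]
                have hΞ : Ξ i m ≤ 2 * ξ * c p := by
                  refine le_trans (hgrow i m) ?_
                  have h1 := hsq p i hik
                  have h2 := hsq p m hmk
                  nlinarith [hξ.le]
                exact mul_le_mul hΞ (ih hnp' m) (abs_nonneg _) (by positivity)
          _ = (Finset.Icc (i - k) (i + k)).card • ((2 * ξ * c p) * (A * (D * c p) ^ n)) :=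
              Finset.sum_const _
          _ ≤ ((2 * k + 1 : ℕ) : ℝ) * ((2 * ξ * c p) * (A * (D * c p) ^ n)) := by
              rw [nsmul_eq_mul]
              apply mul_le_mul_of_nonneg_right _ (mul_nonneg (by positivity)
                (mul_nonneg hA0 (pow_nonneg (mul_nonneg hD0 (hc0 p)) _)))
              have hcard : (Finset.Icc (i - k) (i + k)).card ≤ 2 * k + 1 := by
                rw [Nat.card_Icc]; omega
              exact_mod_cast hcard
          _ = A * (D * c p) ^ (n + 1) := by rw [hD_def]; ring
  -- ℓ² bound
  have hl2 : ∀ n, l2Norm (y n) ≤ A * c n * (D * c n) ^ n := by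
    intro n
    have hb := hbound n n le_rfl
    show Real.sqrt (∑' i, (y n i) ^ 2) ≤ _
    rw [tsum_eq_sum (s := Finset.range (N + n * k + 1)) ?_]
    swap
    · intro i hi
      simp only [Finset.mem_range, not_lt] at hi
      rw [hsupp n i (by omega)]
      ring
    have hsum : ∑ i ∈ Finset.range (N + n * k + 1), (y n i) ^ 2
        ≤ ((N + n * k + 1 : ℕ) : ℝ) * (A * (D * c n) ^ n) ^ 2 := by
      calc ∑ i ∈ Finset.range (N + n * k + 1), (y n i) ^ 2
          ≤ ∑ _i ∈ Finset.range (N + n * k + 1), (A * (D * c n) ^ n) ^ 2 := by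
            apply Finset.sum_le_sum
            intro i _
            rw [← sq_abs]
            exact pow_le_pow_left₀ (abs_nonneg _) (hb i) 2
        _ = _ := by rw [Finset.sum_const, Finset.card_range, nsmul_eq_mul]
    calc Real.sqrt (∑ i ∈ Finset.range (N + n * k + 1), (y n i) ^ 2)
        ≤ Real.sqrt (((N + n * k + 1 : ℕ) : ℝ) * (A * (D * c n) ^ n) ^ 2) :=
          Real.sqrt_le_sqrt hsum
      _ = c n * (A * (D * c n) ^ n) := by
          rw [Real.sqrt_mul (by positivity),
            Real.sqrt_sq (mul_nonneg hA0 (pow_nonneg (mul_nonneg hD0 (hc0 n)) _))]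
          congr 1
          rw [hc_def]
          push_cast
          ring_nf
      _ = A * c n * (D * c n) ^ n := by ring
  -- constants for the majorant
  set T : ℝ := (N : ℝ) + k + 1 with hT_def
  have hT0 : (0 : ℝ) < T := by rw [hT_def]; positivity
  clear_value T
  set E : ℝ := Real.sqrt (T * Real.exp 1) with hE_def
  have hE0 : 0 ≤ E := Real.sqrt_nonneg _
  have hE2 : E ^ 2 = T * Real.exp 1 :=
    Real.sq_sqrt (mul_nonneg hT0.le (Real.exp_pos 1).le)
  clear_value E
  set K : ℝ := A * E with hK_def
  have hK0 : 0 ≤ K := mul_nonneg hA0 hE0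
  set H : ℝ := 2 * z * D * E with hH_def
  have hH0 : 0 ≤ H := by
    rw [hH_def]
    exact mul_nonneg (mul_nonneg (by positivity) hD0) hE0
  clear_value H
  -- key estimate
  have key : ∀ n : ℕ, z ^ n * l2Norm (y n) / n.factorial
      ≤ K * H ^ n / Real.sqrt n.factorial := by
    intro n
    have hfac : (0 : ℝ) < (n.factorial : ℝ) := by positivity
    have hL0 : 0 ≤ l2Norm (y n) := Real.sqrt_nonneg _
    apply le_of_pow_le_pow_left₀ (two_ne_zero)
      (div_nonneg (mul_nonneg hK0 (pow_nonneg hH0 n)) (Real.sqrt_nonneg _))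
    have hb2 : (K * H ^ n / Real.sqrt n.factorial) ^ 2
        = A ^ 2 * (T * Real.exp 1) * (H ^ 2) ^ n / n.factorial := by
      rw [div_pow, Real.sq_sqrt hfac.le, mul_pow, hK_def, mul_pow, hE2,
        ← pow_mul, mul_comm n 2, pow_mul]
    rw [hb2]
    have hcn2 : (c n) ^ 2 = (N : ℝ) + n * k + 1 := Real.sq_sqrt (by positivity)
    have hcn2' : (c n) ^ 2 ≤ T * ((n : ℝ) + 1) := by
      rw [hcn2, hT_def]
      have hN0 : (0 : ℝ) ≤ (N : ℝ) := Nat.cast_nonneg N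
      have hk0 : (0 : ℝ) ≤ (k : ℝ) := Nat.cast_nonneg k
      have hn0 : (0 : ℝ) ≤ (n : ℝ) := Nat.cast_nonneg n
      nlinarith
    have hfact : ((n : ℝ) + 1) ^ (n + 1)
        ≤ Real.exp 1 * (4 * Real.exp 1) ^ n * n.factorial := by
      have h1 := pow_self_le_exp_mul_factorial (n + 1)
      rw [Nat.factorial_succ] at h1
      have h2 : Real.exp ((n : ℝ) + 1) = Real.exp 1 ^ (n + 1) := by
        rw [Real.exp_one_pow]
        push_cast
        ring_nf
      push_cast at h1
      rw [h2] at h1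
      have h3 := nat_add_one_le_four_pow n
      have hexp0 : (0 : ℝ) < Real.exp 1 := Real.exp_pos 1
      have hfacn : (0 : ℝ) ≤ (n.factorial : ℝ) := hfac.le
      calc ((n : ℝ) + 1) ^ (n + 1) ≤ Real.exp 1 ^ (n + 1) * (((n : ℝ) + 1) * n.factorial) := h1
        _ ≤ Real.exp 1 ^ (n + 1) * (4 ^ n * n.factorial) := by
            apply mul_le_mul_of_nonneg_left _ (by positivity)
            exact mul_le_mul_of_nonneg_right h3 hfacn
        _ = Real.exp 1 * (4 * Real.exp 1) ^ n * n.factorial := by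
            rw [pow_succ, mul_pow]; ring
    -- main chain
    have core : (z ^ n) ^ 2 * (l2Norm (y n)) ^ 2
        ≤ A ^ 2 * (T * Real.exp 1) * (H ^ 2) ^ n * n.factorial := by
      have hH2 : H ^ 2 = 4 * (z * D) ^ 2 * (T * Real.exp 1) := by
        rw [hH_def, mul_pow, hE2]; ring
      calc (z ^ n) ^ 2 * (l2Norm (y n)) ^ 2
          ≤ (z ^ n) ^ 2 * (A * c n * (D * c n) ^ n) ^ 2 := by
            apply mul_le_mul_of_nonneg_left _ (by positivity)
            rw [← sq_abs (l2Norm (y n)), abs_of_nonneg hL0]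
            exact pow_le_pow_left₀ hL0 (hl2 n) 2
        _ = A ^ 2 * ((c n) ^ 2) ^ (n + 1) * ((z * D) ^ 2) ^ n := by ring
        _ ≤ A ^ 2 * (T * ((n : ℝ) + 1)) ^ (n + 1) * ((z * D) ^ 2) ^ n := by
            apply mul_le_mul_of_nonneg_right _ (pow_nonneg (sq_nonneg _) n)
            apply mul_le_mul_of_nonneg_left _ (sq_nonneg A)
            exact pow_le_pow_left₀ (sq_nonneg _) hcn2' (n + 1)
        _ = A ^ 2 * T ^ (n + 1) * ((z * D) ^ 2) ^ n * ((n : ℝ) + 1) ^ (n + 1) := by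
            rw [mul_pow]; ring
        _ ≤ A ^ 2 * T ^ (n + 1) * ((z * D) ^ 2) ^ n
              * (Real.exp 1 * (4 * Real.exp 1) ^ n * n.factorial) := by
            apply mul_le_mul_of_nonneg_left hfact
              (mul_nonneg (mul_nonneg (sq_nonneg A) (pow_nonneg hT0.le _))
                (pow_nonneg (sq_nonneg _) n))
        _ = A ^ 2 * (T * Real.exp 1) * (H ^ 2) ^ n * n.factorial := by
            rw [hH2, mul_pow, mul_pow, pow_succ]
            ring
    rw [div_pow, div_le_div_iff₀ (by positivity) hfac]
    calc (z ^ n * l2Norm (y n)) ^ 2 * n.factorial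
        = ((z ^ n) ^ 2 * (l2Norm (y n)) ^ 2) * n.factorial := by ring
      _ ≤ (A ^ 2 * (T * Real.exp 1) * (H ^ 2) ^ n * n.factorial) * n.factorial :=
          mul_le_mul_of_nonneg_right core hfac.le
      _ = A ^ 2 * (T * Real.exp 1) * (H ^ 2) ^ n * ((n.factorial : ℝ)) ^ 2 := by ring
  -- the majorant is summable
  have hmaj : Summable (fun n : ℕ =>
      K * ((2 * H ^ 2) ^ n / n.factorial / 2 + (1 / 2 : ℝ) ^ n / 2)) := by
    apply Summable.mul_left
    apply Summable.add
    · simpa [div_div] using (Real.summable_pow_div_factorial (2 * H ^ 2)).div_const 2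
    · exact (summable_geometric_of_lt_one (by norm_num) (by norm_num)).div_const 2
  apply Summable.of_nonneg_of_le _ _ hmaj
  · intro n
    have hL0 : 0 ≤ l2Norm (y n) := Real.sqrt_nonneg _
    exact div_nonneg (mul_nonneg (pow_nonneg hz0 n) hL0) (Nat.cast_nonneg _)
  · intro n
    calc z ^ n * l2Norm (y n) / n.factorial
        ≤ K * H ^ n / Real.sqrt n.factorial := key n
      _ = K * (H ^ n / Real.sqrt n.factorial) := by ring
      _ ≤ K * ((2 * H ^ 2) ^ n / n.factorial / 2 + (1 / 2 : ℝ) ^ n / 2) :=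
          mul_le_mul_of_nonneg_left (amgm_sqrt_factorial H n) hK0
end

section
/- Let T and B be bounded self-adjoint operators on a complex Hilbert space H. Then for every real ε: ‖exp(i(T + εB)) − exp(iT) − iε ∫₀¹ exp(i(1−u)T) B exp(iuT) du‖ ≤ ε² ‖B‖². (The quantitative Duhamel remainder estimate from the paper's proof of the differentiability of the Fourier functional calculus.) -/
/-!
By Duhamel's formula `exp X - exp Y = ∫₀¹ exp((1-u)X) (X-Y) exp(uY) du`, the remainder equals
`∫₀¹ (exp((1-u)X) - exp((1-u)Y)) (X-Y) exp(uY) du` with `X = i(T+εB)`, `Y = iT`. For skew-adjoint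
arguments all exponentials are unitary, so the same formula makes `exp` 1-Lipschitz on
skew-adjoint elements, and the integrand is bounded by `‖X-Y‖² = ε²‖B‖²`.
-/

open MeasureTheory NormedSpace

section BanachAlgebra

variable {A : Type*} [NormedRing A] [NormedAlgebra ℝ A] [CompleteSpace A]

theorem hasDerivAt_exp_one_sub_smul_mul_exp_smul (X Y : A) (u : ℝ) :
    HasDerivAt (fun v : ℝ => exp ((1 - v) • X) * exp (v • Y))
      (exp ((1 - u) • X) * (Y - X) * exp (u • Y)) u := by
  have hX : HasDerivAt (fun v : ℝ => exp ((1 - v) • X)) ((-1 : ℝ) • (exp ((1 - u) • X) * X)) u :=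
    (hasDerivAt_exp_smul_const X (1 - u)).scomp u ((hasDerivAt_id u).const_sub 1)
  refine (hX.mul (hasDerivAt_exp_smul_const' Y u)).congr_deriv ?_
  rw [neg_one_smul]
  noncomm_ring

variable [NormedAlgebra ℚ A]

theorem exp_sub_exp_eq_integral (X Y : A) :
    exp X - exp Y = ∫ u in (0 : ℝ)..1, exp ((1 - u) • X) * (X - Y) * exp (u • Y) := by
  have hcont : Continuous fun u : ℝ => exp ((1 - u) • X) * (Y - X) * exp (u • Y) := by
    fun_prop
  rw [← neg_sub Y X]
  simp only [mul_neg, neg_mul, intervalIntegral.integral_neg]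
  rw [intervalIntegral.integral_eq_sub_of_hasDerivAt
    (fun u _ => hasDerivAt_exp_one_sub_smul_mul_exp_smul X Y u) (hcont.intervalIntegrable 0 1)]
  simp

end BanachAlgebra

section CStarRing

variable {A : Type*} [NormedRing A] [StarRing A] [CStarRing A] [NormedAlgebra ℚ A]
  [CompleteSpace A]

theorem norm_exp_le_one_of_mem_skewAdjoint {X : A} (hX : X ∈ skewAdjoint A) : ‖exp X‖ ≤ 1 := by
  nontriviality A
  exact (CStarRing.norm_of_mem_unitary (exp_mem_unitary_of_mem_skewAdjoint hX)).le

variable [NormedAlgebra ℝ A] [StarModule ℝ A]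

theorem norm_exp_sub_exp_le_of_mem_skewAdjoint {X Y : A} (hX : X ∈ skewAdjoint A)
    (hY : Y ∈ skewAdjoint A) : ‖exp X - exp Y‖ ≤ ‖X - Y‖ := by
  rw [exp_sub_exp_eq_integral]
  suffices h : ∀ u ∈ Set.uIoc (0 : ℝ) 1, ‖exp ((1 - u) • X) * (X - Y) * exp (u • Y)‖ ≤ ‖X - Y‖ by
    simpa using intervalIntegral.norm_integral_le_of_norm_le_const h
  intro u _
  calc ‖exp ((1 - u) • X) * (X - Y) * exp (u • Y)‖
      ≤ ‖exp ((1 - u) • X)‖ * ‖X - Y‖ * ‖exp (u • Y)‖ := norm_mul₃_le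
    _ ≤ 1 * ‖X - Y‖ * 1 := by
      gcongr
      · exact norm_exp_le_one_of_mem_skewAdjoint (skewAdjoint.smul_mem _ hX)
      · exact norm_exp_le_one_of_mem_skewAdjoint (skewAdjoint.smul_mem _ hY)
    _ = ‖X - Y‖ := by ring

theorem norm_exp_sub_exp_sub_integral_le_of_mem_skewAdjoint {X Y : A} (hX : X ∈ skewAdjoint A)
    (hY : Y ∈ skewAdjoint A) :
    ‖exp X - exp Y - ∫ u in (0 : ℝ)..1, exp ((1 - u) • Y) * (X - Y) * exp (u • Y)‖ ≤
      ‖X - Y‖ ^ 2 := by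
  have hcont : ∀ Z : A, Continuous fun u : ℝ => exp ((1 - u) • Z) * (X - Y) * exp (u • Y) := by
    intro Z; fun_prop
  rw [exp_sub_exp_eq_integral, ← intervalIntegral.integral_sub ((hcont X).intervalIntegrable 0 1)
    ((hcont Y).intervalIntegrable 0 1)]
  suffices h : ∀ u ∈ Set.uIoc (0 : ℝ) 1, ‖exp ((1 - u) • X) * (X - Y) * exp (u • Y) -
      exp ((1 - u) • Y) * (X - Y) * exp (u • Y)‖ ≤ ‖X - Y‖ ^ 2 by
    simpa using intervalIntegral.norm_integral_le_of_norm_le_const h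
  intro u hu
  rw [Set.uIoc_of_le zero_le_one] at hu
  calc ‖exp ((1 - u) • X) * (X - Y) * exp (u • Y) - exp ((1 - u) • Y) * (X - Y) * exp (u • Y)‖
      = ‖(exp ((1 - u) • X) - exp ((1 - u) • Y)) * (X - Y) * exp (u • Y)‖ := by
        rw [sub_mul, sub_mul]
    _ ≤ ‖exp ((1 - u) • X) - exp ((1 - u) • Y)‖ * ‖X - Y‖ * ‖exp (u • Y)‖ := norm_mul₃_le
    _ ≤ ‖(1 - u) • X - (1 - u) • Y‖ * ‖X - Y‖ * 1 := by
      gcongr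
      · exact norm_exp_sub_exp_le_of_mem_skewAdjoint (skewAdjoint.smul_mem _ hX)
          (skewAdjoint.smul_mem _ hY)
      · exact norm_exp_le_one_of_mem_skewAdjoint (skewAdjoint.smul_mem _ hY)
    _ ≤ ‖X - Y‖ * ‖X - Y‖ * 1 := by
      rw [← smul_sub, norm_smul, Real.norm_of_nonneg (by linarith [hu.2])]
      gcongr
      exact mul_le_of_le_one_left (norm_nonneg _) (by linarith [hu.1])
    _ = ‖X - Y‖ ^ 2 := by ring

end CStarRing

/-- The quantitative Duhamel remainder estimate: for bounded self-adjoint operators `T, B`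
on a complex Hilbert space and every real `ε`,
`‖exp(i(T+εB)) − exp(iT) − iε ∫₀¹ exp(i(1−u)T) B exp(iuT) du‖ ≤ ε² ‖B‖²`. -/
theorem duhamel_remainder_estimate
    {H : Type*} [NormedAddCommGroup H] [InnerProductSpace ℂ H] [CompleteSpace H]
    (T B : H →L[ℂ] H) (hT : IsSelfAdjoint T) (hB : IsSelfAdjoint B) (ε : ℝ) :
    ‖NormedSpace.exp (Complex.I • (T + ε • B)) - NormedSpace.exp (Complex.I • T) -
        (Complex.I * (ε : ℂ)) •
          ∫ u in Set.Icc (0:ℝ) 1,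
            NormedSpace.exp ((Complex.I * ((1 - u : ℝ) : ℂ)) • T) * B *
              NormedSpace.exp ((Complex.I * ((u : ℝ) : ℂ)) • T)‖ ≤
      ε ^ 2 * ‖B‖ ^ 2 := by
  -- `exp` does not depend on this choice; only the general lemmas ask for it.
  let _ : NormedAlgebra ℚ (H →L[ℂ] H) := .restrictScalars ℚ ℂ _
  have hI : Complex.I ∈ skewAdjoint ℂ := by simp [skewAdjoint.mem_iff]
  have hεB : IsSelfAdjoint (ε • B) := .smul (R := ℝ) (.all ε) hB
  have hXY : Complex.I • (T + ε • B) - Complex.I • T = (Complex.I * (ε : ℂ)) • B := by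
    rw [smul_add, add_sub_cancel_left, ← Complex.coe_smul, smul_smul]
  have hsmul : ∀ r : ℝ, (Complex.I * (r : ℂ)) • T = r • (Complex.I • T) := fun r => by
    rw [← Complex.coe_smul, smul_smul, mul_comm]
  have hintegral : (Complex.I * (ε : ℂ)) • ∫ u in Set.Icc (0:ℝ) 1,
      exp ((Complex.I * ((1 - u : ℝ) : ℂ)) • T) * B * exp ((Complex.I * ((u : ℝ) : ℂ)) • T) =
      ∫ u in (0 : ℝ)..1, exp ((1 - u) • (Complex.I • T)) *
        (Complex.I • (T + ε • B) - Complex.I • T) * exp (u • (Complex.I • T)) := by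
    rw [intervalIntegral.integral_of_le zero_le_one, ← integral_Icc_eq_integral_Ioc,
      ← integral_smul, hXY]
    simp only [hsmul, mul_smul_comm, smul_mul_assoc]
  rw [hintegral]
  refine (norm_exp_sub_exp_sub_integral_le_of_mem_skewAdjoint
    ((hT.add hεB).smul_mem_skewAdjoint hI) (hT.smul_mem_skewAdjoint hI)).trans_eq ?_
  rw [hXY, norm_smul, mul_pow]
  simp
end

section
/- Let T and B be bounded self-adjoint operators on a complex Hilbert space H, and let g : ℝ → ℂ be measurable with ∫_ℝ (1 + |p| + p²)|g(p)| dp < ∞. For a bounded self-adjoint operator A define Φ(A) := ∫_ℝ g(p) exp(ipA) dp and set D := ∫_ℝ ∫₀¹ i p g(p) exp(ip(1−u)T) B exp(ipuT) du dp (Bochner integrals in operator norm). Then for every real ε: ‖Φ(T + εB) − Φ(T) − ε D‖ ≤ ε² ‖B‖² ∫_ℝ p² |g(p)| dp. In particular ε ↦ Φ(T + εB) is differentiable at ε = 0 in operator norm with derivative D. (The first differential formula of the paper's proposition on differentials of the Fourier functional calculus, with g playing the role of the Fourier transform of f ∈ C^{2+}(ℝ), stated for bounded T.) -/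
/-!
For skew-adjoint `X`, `Y` in a C⋆-algebra, `t ↦ exp (t • X)` takes unitary values, so Duhamel's
formula `exp (s • X) - exp (s • Y) = s • ∫₀¹ exp ((1 - u) s • Y) (X - Y) exp (u s • X) du` gives
`‖exp (s • X) - exp (s • Y)‖ ≤ |s| ‖X - Y‖`. Feeding this bound back into Duhamel's formula to
replace `exp (u s • X)` by `exp (u s • Y)` costs at most `s² ‖X - Y‖²`. With `X = i (T + εB)`,
`Y = iT` and `s = p` this is `ε² p² ‖B‖²`; integrating against `|g|` gives the estimate, and an
`O(ε²)` remainder gives the derivative.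
-/

open MeasureTheory

variable {H : Type*} [NormedAddCommGroup H] [InnerProductSpace ℂ H] [CompleteSpace H]

/-- The Fourier functional calculus `Φ(A) = ∫_ℝ g(p) exp(ipA) dp`, with `g` playing the
role of the Fourier transform of `f ∈ C^{2+}(ℝ)`. -/
noncomputable def fourierCalculus (g : ℝ → ℂ) (A : H →L[ℂ] H) : H →L[ℂ] H :=
  ∫ p : ℝ, g p • NormedSpace.exp ((Complex.I * (p : ℂ)) • A)

/-- The candidate first differential
`D = ∫_ℝ ∫₀¹ i p g(p) exp(ip(1−u)T) B exp(ipuT) du dp`. -/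
noncomputable def fourierCalculusDeriv (g : ℝ → ℂ) (T B : H →L[ℂ] H) : H →L[ℂ] H :=
  ∫ p : ℝ, ∫ u in Set.Icc (0:ℝ) 1,
    (Complex.I * (p : ℂ) * g p) •
      (NormedSpace.exp ((Complex.I * ((p * (1 - u) : ℝ) : ℂ)) • T) * B *
        NormedSpace.exp ((Complex.I * ((p * u : ℝ) : ℂ)) • T))

open NormedSpace

section Duhamel

variable {𝔸 : Type*} [NormedRing 𝔸] [NormedAlgebra ℝ 𝔸]

/-- `s • duhamelIntegral Y Z s` is the derivative of `ε ↦ exp (s • (Y + ε • Z))` at `ε = 0`. -/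
noncomputable def duhamelIntegral (Y Z : 𝔸) (s : ℝ) : 𝔸 :=
  ∫ u in (0 : ℝ)..1, exp (((1 - u) * s) • Y) * Z * exp ((u * s) • Y)

theorem duhamelIntegral_smul_right (Y Z : 𝔸) (c s : ℝ) :
    duhamelIntegral Y (c • Z) s = c • duhamelIntegral Y Z s := by
  simp only [duhamelIntegral, ← intervalIntegral.integral_smul, smul_mul_assoc, mul_smul_comm]

variable [CompleteSpace 𝔸]

theorem continuous_exp_smul (X : 𝔸) : Continuous fun t : ℝ => exp (t • X) :=
  continuous_iff_continuousAt.2 fun t => (hasDerivAt_exp_smul_const X t).continuousAt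

theorem continuous_duhamelIntegral (Y Z : 𝔸) : Continuous (duhamelIntegral Y Z) := by
  apply intervalIntegral.continuous_parametric_intervalIntegral_of_continuous'
  exact (((continuous_exp_smul Y).comp ((continuous_const.sub continuous_snd).mul
    continuous_fst)).mul continuous_const).mul
    ((continuous_exp_smul Y).comp (continuous_snd.mul continuous_fst))

theorem exp_sub_exp_eq_intervalIntegral (X Y : 𝔸) :
    exp X - exp Y = ∫ u in (0 : ℝ)..1, exp ((1 - u) • Y) * (X - Y) * exp (u • X) := by
  have hderiv (u : ℝ) : HasDerivAt (fun u : ℝ => exp ((1 - u) • Y) * exp (u • X))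
      (exp ((1 - u) • Y) * (X - Y) * exp (u • X)) u := by
    have hY : HasDerivAt (fun u : ℝ => exp ((1 - u) • Y))
        ((-1 : ℝ) • (exp ((1 - u) • Y) * Y)) u :=
      (hasDerivAt_exp_smul_const Y (1 - u)).scomp u ((hasDerivAt_id u).const_sub 1)
    refine (hY.mul (hasDerivAt_exp_smul_const X u)).congr_deriv ?_
    rw [(((Commute.refl X).smul_left u).exp_left).eq]
    simp only [neg_one_smul]
    noncomm_ring
  have hcont : Continuous fun u : ℝ => exp ((1 - u) • Y) * (X - Y) * exp (u • X) :=
    (((continuous_exp_smul Y).comp (continuous_const.sub continuous_id)).mul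
      continuous_const).mul (continuous_exp_smul X)
  rw [intervalIntegral.integral_eq_sub_of_hasDerivAt (fun u _ => hderiv u)
    (hcont.intervalIntegrable 0 1)]
  simp

theorem exp_smul_sub_exp_smul_eq_intervalIntegral (X Y : 𝔸) (s : ℝ) :
    exp (s • X) - exp (s • Y) =
      s • ∫ u in (0 : ℝ)..1, exp (((1 - u) * s) • Y) * (X - Y) * exp ((u * s) • X) := by
  rw [exp_sub_exp_eq_intervalIntegral, ← intervalIntegral.integral_smul]
  congr 1 with u
  simp only [← smul_sub, smul_smul, smul_mul_assoc, mul_smul_comm]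

end Duhamel

section Unitary

variable {𝔸 : Type*} [NormedRing 𝔸] [StarRing 𝔸] [CStarRing 𝔸] [NormedAlgebra ℝ 𝔸]
  [StarModule ℝ 𝔸] [CompleteSpace 𝔸] {X Y : 𝔸}

theorem exp_smul_mem_unitary (hX : X ∈ skewAdjoint 𝔸) (t : ℝ) : exp (t • X) ∈ unitary 𝔸 :=
  let +nondep : NormedAlgebra ℚ 𝔸 := .restrictScalars ℚ ℝ 𝔸
  exp_mem_unitary_of_mem_skewAdjoint (skewAdjoint.smul_mem t hX)

theorem norm_exp_smul_mul_mul_exp_smul (hX : X ∈ skewAdjoint 𝔸) (hY : Y ∈ skewAdjoint 𝔸)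
    (s t : ℝ) (Z : 𝔸) : ‖exp (s • X) * Z * exp (t • Y)‖ = ‖Z‖ := by
  rw [CStarRing.norm_mul_mem_unitary _ (exp_smul_mem_unitary hY t),
    CStarRing.norm_mem_unitary_mul _ (exp_smul_mem_unitary hX s)]

theorem norm_exp_smul (hX : X ∈ skewAdjoint 𝔸) (t : ℝ) : ‖exp (t • X)‖ = ‖(1 : 𝔸)‖ := by
  rw [← CStarRing.norm_mul_mem_unitary 1 (exp_smul_mem_unitary hX t), one_mul]

theorem norm_duhamelIntegral_le (hY : Y ∈ skewAdjoint 𝔸) (Z : 𝔸) (s : ℝ) :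
    ‖duhamelIntegral Y Z s‖ ≤ ‖Z‖ := by
  simpa [duhamelIntegral] using
    intervalIntegral.norm_integral_le_of_norm_le_const (a := 0) (b := 1) fun u _ =>
      (norm_exp_smul_mul_mul_exp_smul hY hY ((1 - u) * s) (u * s) Z).le

theorem norm_exp_smul_sub_exp_smul_le (hX : X ∈ skewAdjoint 𝔸) (hY : Y ∈ skewAdjoint 𝔸)
    (s : ℝ) : ‖exp (s • X) - exp (s • Y)‖ ≤ |s| * ‖X - Y‖ := by
  rw [exp_smul_sub_exp_smul_eq_intervalIntegral, norm_smul, Real.norm_eq_abs]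
  gcongr
  simpa using intervalIntegral.norm_integral_le_of_norm_le_const (a := 0) (b := 1)
    fun u _ => (norm_exp_smul_mul_mul_exp_smul hY hX ((1 - u) * s) (u * s) (X - Y)).le

theorem norm_exp_smul_sub_exp_smul_sub_duhamelIntegral_le (hX : X ∈ skewAdjoint 𝔸)
    (hY : Y ∈ skewAdjoint 𝔸) (s : ℝ) :
    ‖exp (s • X) - exp (s • Y) - s • duhamelIntegral Y (X - Y) s‖ ≤ s ^ 2 * ‖X - Y‖ ^ 2 := by
  set f := fun u : ℝ => exp (((1 - u) * s) • Y) * (X - Y)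
  have hf : Continuous f := ((continuous_exp_smul Y).comp
    ((continuous_const.sub continuous_id).mul continuous_const)).mul continuous_const
  have hsplit : exp (s • X) - exp (s • Y) - s • duhamelIntegral Y (X - Y) s =
      s • ∫ u in (0 : ℝ)..1, f u * (exp ((u * s) • X) - exp ((u * s) • Y)) := by
    have hcont (Z : 𝔸) : Continuous fun u : ℝ => f u * exp ((u * s) • Z) :=
      hf.mul ((continuous_exp_smul Z).comp (continuous_id.mul continuous_const))
    rw [exp_smul_sub_exp_smul_eq_intervalIntegral, duhamelIntegral, ← smul_sub,
      ← intervalIntegral.integral_sub ((hcont X).intervalIntegrable 0 1)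
        ((hcont Y).intervalIntegrable 0 1)]
    simp only [f, mul_sub]
  have hbound (u : ℝ) (hu : u ∈ Set.uIoc 0 1) :
      ‖f u * (exp ((u * s) • X) - exp ((u * s) • Y))‖ ≤ ‖X - Y‖ * (|s| * ‖X - Y‖) := by
    rw [Set.uIoc_of_le zero_le_one] at hu
    have hus : |u * s| ≤ |s| := by
      rw [abs_mul, abs_of_pos hu.1]
      exact mul_le_of_le_one_left (abs_nonneg s) hu.2
    calc _ ≤ ‖f u‖ * ‖exp ((u * s) • X) - exp ((u * s) • Y)‖ := norm_mul_le _ _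
      _ ≤ ‖X - Y‖ * (|u * s| * ‖X - Y‖) := by
          rw [CStarRing.norm_mem_unitary_mul _ (exp_smul_mem_unitary hY _)]
          gcongr
          exact norm_exp_smul_sub_exp_smul_le hX hY _
      _ ≤ ‖X - Y‖ * (|s| * ‖X - Y‖) := by gcongr
  calc _ = |s| * ‖∫ u in (0 : ℝ)..1, f u * (exp ((u * s) • X) - exp ((u * s) • Y))‖ := by
          rw [hsplit, norm_smul, Real.norm_eq_abs]
    _ ≤ |s| * (‖X - Y‖ * (|s| * ‖X - Y‖)) := by
          gcongr
          simpa using intervalIntegral.norm_integral_le_of_norm_le_const hbound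
    _ = s ^ 2 * ‖X - Y‖ ^ 2 := by rw [← sq_abs s]; ring

end Unitary

section Integrable

variable {𝔸 : Type*} [NormedRing 𝔸] [StarRing 𝔸] [CStarRing 𝔸] [NormedAlgebra ℂ 𝔸]
  [StarModule ℂ 𝔸] [CompleteSpace 𝔸]

theorem integrable_smul_exp_smul {φ : ℝ → ℂ} (hφ : Integrable φ) {X : 𝔸}
    (hX : X ∈ skewAdjoint 𝔸) : Integrable fun p : ℝ => φ p • exp (p • X) :=
  hφ.smul_bdd ‖(1 : 𝔸)‖ (continuous_exp_smul X).aestronglyMeasurable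
    (ae_of_all _ fun p => (norm_exp_smul hX p).le)

theorem integrable_smul_duhamelIntegral {φ : ℝ → ℂ} (hφ : Integrable φ) {Y : 𝔸}
    (hY : Y ∈ skewAdjoint 𝔸) (Z : 𝔸) : Integrable fun p : ℝ => φ p • duhamelIntegral Y Z p :=
  hφ.smul_bdd ‖Z‖ (continuous_duhamelIntegral Y Z).aestronglyMeasurable
    (ae_of_all _ fun p => norm_duhamelIntegral_le hY Z p)

end Integrable

theorem hasDerivAt_of_norm_sub_sub_smul_le_sq {E : Type*} [NormedAddCommGroup E]
    [NormedSpace ℝ E] {f : ℝ → E} {f' : E} {C : ℝ}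
    (h : ∀ ε : ℝ, ‖f ε - f 0 - ε • f'‖ ≤ ε ^ 2 * C) : HasDerivAt f f' 0 := by
  rw [hasDerivAt_iff_isLittleO]
  simp only [sub_zero]
  refine (Asymptotics.IsBigO.of_bound C (Filter.Eventually.of_forall fun ε => ?_)).trans_isLittleO
    (Asymptotics.isLittleO_pow_id (n := 2) one_lt_two)
  simpa [mul_comm C] using h ε

theorem I_mul_ofReal_smul {E : Type*} [AddCommGroup E] [Module ℂ E] (p : ℝ) (A : E) :
    (Complex.I * (p : ℂ)) • A = p • (Complex.I • A) := by
  rw [mul_comm, mul_smul, Complex.coe_smul]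

theorem fourierCalculus_eq_integral (g : ℝ → ℂ) (A : H →L[ℂ] H) :
    fourierCalculus g A = ∫ p : ℝ, g p • exp (p • (Complex.I • A)) := by
  simp only [fourierCalculus, I_mul_ofReal_smul]

theorem fourierCalculusDeriv_eq_integral (g : ℝ → ℂ) (T B : H →L[ℂ] H) :
    fourierCalculusDeriv g T B =
      ∫ p : ℝ, ((p : ℂ) * g p) • duhamelIntegral (Complex.I • T) (Complex.I • B) p := by
  rw [fourierCalculusDeriv]
  congr 1; funext p
  rw [integral_Icc_eq_integral_Ioc, ← intervalIntegral.integral_of_le zero_le_one,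
    duhamelIntegral, ← intervalIntegral.integral_smul]
  congr 1; funext u
  simp only [I_mul_ofReal_smul, mul_smul_comm, smul_mul_assoc, smul_smul, mul_comm u p,
    mul_comm (1 - u) p]
  ring_nf

theorem fourierCalculus_sub_sub_smul_deriv_eq_integral {g : ℝ → ℂ} (hg₀ : Integrable g)
    (hg₁ : Integrable fun p : ℝ => (p : ℂ) * g p) {T B : H →L[ℂ] H} (hT : IsSelfAdjoint T)
    (hB : IsSelfAdjoint B) (ε : ℝ) :
    fourierCalculus g (T + ε • B) - fourierCalculus g T - ε • fourierCalculusDeriv g T B =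
      ∫ p : ℝ, g p • (exp (p • (Complex.I • (T + ε • B))) - exp (p • (Complex.I • T)) -
        p • duhamelIntegral (Complex.I • T) (Complex.I • (T + ε • B) - Complex.I • T) p) := by
  have hskew {A : H →L[ℂ] H} (hA : IsSelfAdjoint A) : Complex.I • A ∈ skewAdjoint _ :=
    hA.smul_mem_skewAdjoint Complex.conj_I
  have hdiff : Complex.I • (T + ε • B) - Complex.I • T = ε • (Complex.I • B) := by
    rw [smul_add, add_sub_cancel_left, smul_comm]
  have hΦ {A : H →L[ℂ] H} (hA : IsSelfAdjoint A) :
      Integrable fun p : ℝ => g p • exp (p • (Complex.I • A)) :=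
    integrable_smul_exp_smul hg₀ (hskew hA)
  have hS : IsSelfAdjoint (T + ε • B) := hT.add ((IsSelfAdjoint.all ε).smul hB)
  rw [fourierCalculus_eq_integral, fourierCalculus_eq_integral, fourierCalculusDeriv_eq_integral,
    ← integral_smul, ← integral_sub (hΦ hS) (hΦ hT),
    ← integral_sub ?_ ((integrable_smul_duhamelIntegral hg₁ (hskew hT) _).fun_smul ε)]
  · congr 1; funext p
    rw [hdiff, duhamelIntegral_smul_right, smul_sub, smul_sub]
    congr 1
    simp only [← Complex.coe_smul, smul_smul]
    ring_nf
  · exact (hΦ hS).sub (hΦ hT)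

theorem norm_fourierCalculus_sub_sub_smul_deriv_le {g : ℝ → ℂ} (hg₀ : Integrable g)
    (hg₁ : Integrable fun p : ℝ => (p : ℂ) * g p) (hg₂ : Integrable fun p : ℝ => p ^ 2 * ‖g p‖)
    {T B : H →L[ℂ] H} (hT : IsSelfAdjoint T) (hB : IsSelfAdjoint B) (ε : ℝ) :
    ‖fourierCalculus g (T + ε • B) - fourierCalculus g T - ε • fourierCalculusDeriv g T B‖ ≤
      ε ^ 2 * ‖B‖ ^ 2 * ∫ p : ℝ, p ^ 2 * ‖g p‖ := by
  have hS : IsSelfAdjoint (T + ε • B) := hT.add ((IsSelfAdjoint.all ε).smul hB)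
  have hdiff : ‖Complex.I • (T + ε • B) - Complex.I • T‖ = |ε| * ‖B‖ := by
    rw [smul_add, add_sub_cancel_left, norm_smul, Complex.norm_I, one_mul, norm_smul,
      Real.norm_eq_abs]
  rw [fourierCalculus_sub_sub_smul_deriv_eq_integral hg₀ hg₁ hT hB, ← integral_const_mul]
  refine norm_integral_le_of_norm_le (hg₂.const_mul _) (ae_of_all _ fun p => ?_)
  calc _ ≤ ‖g p‖ * (p ^ 2 * ‖Complex.I • (T + ε • B) - Complex.I • T‖ ^ 2) := by
        rw [norm_smul]
        gcongr
        exact norm_exp_smul_sub_exp_smul_sub_duhamelIntegral_le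
          (hS.smul_mem_skewAdjoint Complex.conj_I) (hT.smul_mem_skewAdjoint Complex.conj_I) p
    _ = ε ^ 2 * ‖B‖ ^ 2 * (p ^ 2 * ‖g p‖) := by rw [hdiff, mul_pow, sq_abs]; ring

/-- The first differential of the Fourier functional calculus: for bounded self-adjoint
`T, B` and `g` with `∫ (1+|p|+p²)|g(p)| dp < ∞`, one has
`‖Φ(T+εB) − Φ(T) − εD‖ ≤ ε²‖B‖² ∫ p²|g(p)| dp` for every real `ε`; in particular
`ε ↦ Φ(T+εB)` is differentiable at `ε = 0` in operator norm with derivative `D`. -/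
theorem fourierCalculus_first_differential
    (T B : H →L[ℂ] H) (hT : IsSelfAdjoint T) (hB : IsSelfAdjoint B)
    (g : ℝ → ℂ) (hgm : Measurable g)
    (hgint : Integrable fun p : ℝ => (1 + |p| + p ^ 2) * ‖g p‖) :
    (∀ ε : ℝ,
      ‖fourierCalculus g (T + ε • B) - fourierCalculus g T -
          ε • fourierCalculusDeriv g T B‖ ≤
        ε ^ 2 * ‖B‖ ^ 2 * ∫ p : ℝ, p ^ 2 * ‖g p‖) ∧
    HasDerivAt (fun ε : ℝ => fourierCalculus g (T + ε • B)) (fourierCalculusDeriv g T B) 0 := by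
  have hg₀ : Integrable g := hgint.mono' hgm.aestronglyMeasurable <| ae_of_all _ fun p =>
    le_mul_of_one_le_left (norm_nonneg _) (by nlinarith [abs_nonneg p])
  have hg₁ : Integrable fun p : ℝ => (p : ℂ) * g p :=
    hgint.mono' (Complex.measurable_ofReal.mul hgm).aestronglyMeasurable <| ae_of_all _ fun p => by
      rw [norm_mul, Complex.norm_real, Real.norm_eq_abs]
      exact mul_le_mul_of_nonneg_right (by nlinarith) (norm_nonneg _)
  have hg₂ : Integrable fun p : ℝ => p ^ 2 * ‖g p‖ :=
    hgint.mono' ((measurable_id.pow_const 2).mul hgm.norm).aestronglyMeasurable <|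
      ae_of_all _ fun p => by
        rw [Real.norm_of_nonneg (by positivity)]
        exact mul_le_mul_of_nonneg_right (by nlinarith [abs_nonneg p]) (norm_nonneg _)
  have hbound := norm_fourierCalculus_sub_sub_smul_deriv_le hg₀ hg₁ hg₂ hT hB
  refine ⟨hbound, hasDerivAt_of_norm_sub_sub_smul_le_sq (C := ‖B‖ ^ 2 * ∫ p, p ^ 2 * ‖g p‖)
    fun ε => ?_⟩
  simpa [mul_assoc] using hbound ε
end
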